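/- arXiv:2303.04971 — 3 statements merged into one kernel-verified Lean document; each statement's English description precedes it below -/
import Mathlib

section
/- Let A and E be n×n real matrices. The function t ↦ Tr(exp(A + t·E)) is differentiable at t = 0 with derivative Tr(exp(A)·E); that is, d/dt Tr(exp(A + tE))|_{t=0} = Tr(exp(A)·E). -/
/-!
Expanding `exp` as a power series, `τ (exp (x + t • y)) = ∑ τ ((x + t • y) ^ k) / k!` for any
continuous linear functional `τ` with `τ (a * b) = τ (b * a)`. By this cyclicity the `k` terms of
the derivative of `(x + t • y) ^ k` all have the same image `τ ((x + t • y) ^ (k - 1) * y)`, so the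
differentiated series is `∑ τ (x ^ m * y) / m! = τ (exp x * y)`. Termwise differentiation is
justified by the bound `(‖x‖ + ‖y‖) ^ m / m! * ‖τ‖ * ‖y‖` on the derivatives for `‖t‖ ≤ 1`.
-/

open NormedSpace
open scoped Nat

theorem norm_pow_mul_le {R : Type*} [SeminormedRing R] (a b : R) (m : ℕ) :
    ‖a ^ m * b‖ ≤ ‖a‖ ^ m * ‖b‖ := by
  induction m with
  | zero => simp
  | succ m ih =>
    calc ‖a ^ (m + 1) * b‖ = ‖a * (a ^ m * b)‖ := by rw [pow_succ', mul_assoc]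
      _ ≤ ‖a‖ * (‖a‖ ^ m * ‖b‖) := (norm_mul_le _ _).trans (by gcongr)
      _ = ‖a‖ ^ (m + 1) * ‖b‖ := by ring

section TraceLike

variable {𝕂 𝔸 : Type*} [RCLike 𝕂] [NormedRing 𝔸] [NormedAlgebra 𝕂 𝔸] {τ : 𝔸 →L[𝕂] 𝕂}

theorem hasDerivAt_map_pow_add_smul (hτ : ∀ a b, τ (a * b) = τ (b * a)) (x y : 𝔸) (k : ℕ)
    (t : 𝕂) :
    HasDerivAt (fun s : 𝕂 => τ ((x + s • y) ^ k)) (k * τ ((x + t • y) ^ (k - 1) * y)) t := by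
  have hline : HasDerivAt (fun s : 𝕂 => x + s • y) y t := by
    simpa using ((hasDerivAt_id t).smul_const y).const_add x
  refine (τ.hasFDerivAt.comp_hasDerivAt t (hline.fun_pow' k)).congr_deriv ?_
  have hcyc : ∀ i ∈ Finset.range k,
      τ ((x + t • y) ^ (k.pred - i) * y * (x + t • y) ^ i) = τ ((x + t • y) ^ (k - 1) * y) := by
    intro i hi
    rw [hτ, ← mul_assoc, ← pow_add, Nat.pred_eq_sub_one,
      Nat.add_sub_of_le (Nat.le_sub_one_of_lt (Finset.mem_range.mp hi))]
  rw [map_sum, Finset.sum_congr rfl hcyc, Finset.sum_const, Finset.card_range, nsmul_eq_mul]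

theorem hasSum_map_exp_mul [CompleteSpace 𝔸] (x y : 𝔸) :
    HasSum (fun m : ℕ => (m !⁻¹ : 𝕂) * τ (x ^ m * y)) (τ (exp x * y)) := by
  simpa [smul_mul_assoc] using τ.hasSum ((exp_series_hasSum_exp' (𝕂 := 𝕂) x).mul_right y)

theorem norm_inv_factorial_mul_map_le (x y : 𝔸) (m : ℕ) {t : 𝕂} (ht : ‖t‖ ≤ 1) :
    ‖(m !⁻¹ : 𝕂) * τ ((x + t • y) ^ m * y)‖ ≤ (‖x‖ + ‖y‖) ^ m / m ! * (‖τ‖ * ‖y‖) := by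
  have hxy : ‖x + t • y‖ ≤ ‖x‖ + ‖y‖ :=
    (norm_add_le _ _).trans (by grw [norm_smul, ht, one_mul])
  calc ‖(m !⁻¹ : 𝕂) * τ ((x + t • y) ^ m * y)‖
      ≤ (m ! : ℝ)⁻¹ * (‖τ‖ * (‖x + t • y‖ ^ m * ‖y‖)) := by
        rw [norm_mul, norm_inv, RCLike.norm_natCast]
        grw [τ.le_opNorm, norm_pow_mul_le]
    _ ≤ (m ! : ℝ)⁻¹ * (‖τ‖ * ((‖x‖ + ‖y‖) ^ m * ‖y‖)) := by gcongr
    _ = (‖x‖ + ‖y‖) ^ m / m ! * (‖τ‖ * ‖y‖) := by ring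

theorem hasDerivAt_map_exp_add_smul [CompleteSpace 𝔸] (hτ : ∀ a b, τ (a * b) = τ (b * a))
    (x y : 𝔸) :
    HasDerivAt (fun t : 𝕂 => τ (exp (x + t • y))) (τ (exp x * y)) 0 := by
  set term : ℕ → 𝕂 → 𝕂 := fun m t => ((m + 1)! : 𝕂)⁻¹ * τ ((x + t • y) ^ (m + 1))
  have hsum : ∀ t, HasSum (fun m => term m t) (τ (exp (x + t • y)) - τ 1) := fun t => by
    have h := hasSum_map_exp_mul (τ := τ) (x + t • y) 1
    simp only [mul_one] at h
    have h1 := (hasSum_nat_add_iff' 1).mpr h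
    simpa only [Finset.sum_range_one, Nat.factorial_zero, Nat.cast_one, inv_one, pow_zero,
      one_mul] using h1
  have hexp : (fun t : 𝕂 => τ (exp (x + t • y))) = fun t => τ 1 + ∑' m, term m t := by
    ext t
    rw [(hsum t).tsum_eq, add_sub_cancel]
  have hterm : ∀ m t, HasDerivAt (term m) ((m ! : 𝕂)⁻¹ * τ ((x + t • y) ^ m * y)) t := by
    intro m t
    refine ((hasDerivAt_map_pow_add_smul hτ x y (m + 1) t).const_mul _).congr_deriv ?_
    rw [Nat.factorial_succ]
    push_cast
    field_simp
  have hseries : HasDerivAt (fun t => ∑' m, term m t)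
      (∑' m, (m ! : 𝕂)⁻¹ * τ (x ^ m * y)) 0 := by
    simpa using hasDerivAt_tsum_of_isPreconnected
      ((Real.summable_pow_div_factorial (‖x‖ + ‖y‖)).mul_right (‖τ‖ * ‖y‖))
      Metric.isOpen_ball (convex_ball (0 : 𝕂) 1).isPreconnected (fun m t _ => hterm m t)
      (fun m t ht => norm_inv_factorial_mul_map_le x y m (mem_ball_zero_iff.mp ht).le)
      (Metric.mem_ball_self one_pos) (hsum 0).summable (Metric.mem_ball_self one_pos)
  rw [(hasSum_map_exp_mul x y).tsum_eq] at hseries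
  rw [hexp, ← zero_add (τ (exp x * y))]
  exact (hasDerivAt_const 0 (τ 1)).add hseries

end TraceLike

/-- For `n × n` real matrices `A` and `E`, the function `t ↦ Tr(exp (A + t • E))` is
differentiable at `t = 0` with derivative `Tr(exp A * E)`. -/
theorem hasDerivAt_trace_exp {n : ℕ} (A E : Matrix (Fin n) (Fin n) ℝ) :
    HasDerivAt (fun t : ℝ => (NormedSpace.exp (A + t • E)).trace)
      ((NormedSpace.exp A * E).trace) 0 := by
  -- `exp` depends only on the topology, and the `‖·‖∞` operator norm induces the product one.
  let : NormedRing (Matrix (Fin n) (Fin n) ℝ) := Matrix.linftyOpNormedRing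
  let : NormedAlgebra ℝ (Matrix (Fin n) (Fin n) ℝ) := Matrix.linftyOpNormedAlgebra
  exact hasDerivAt_map_exp_add_smul
    (τ := (Matrix.traceLinearMap (Fin n) ℝ ℝ).toContinuousLinearMap) Matrix.trace_mul_comm A E
end

section
/- Let M and E be n×n real matrices and let L_exp(M, E) denote the Fréchet derivative of the matrix exponential at M applied to E. Then the matrix exponential of the 2n×2n block upper triangular matrix [[M, E], [0, M]] equals the block matrix [[exp(M), L_exp(M, E)], [0, exp(M)]]. -/
attribute [local instance] Matrix.linftyOpNormedRing Matrix.linftyOpNormedAlgebra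

/-!
Conjugating by the unipotent matrix `[[1, Z], [0, 1]]` block-diagonalises
`[[A, Z B - A Z], [0, B]]`, so its exponential is `[[exp A, Z exp B - exp A Z], [0, exp B]]`.
With `A = M + t E`, `B = M` and `Z = -t⁻¹` this says that the `(1,2)` block of
`exp [[M + t E, E], [0, M]]` is the difference quotient `t⁻¹ (exp (M + t E) - exp M)`.
Letting `t → 0`, the left side tends to `exp [[M, E], [0, M]]` by continuity of `exp`, and the
difference quotient tends to `L_exp(M, E)` because `exp` is analytic, hence differentiable.
-/

open NormedSpace Matrix Filter Topology

variable {𝕂 m n : Type*} [RCLike 𝕂] [Fintype m] [DecidableEq m] [Fintype n] [DecidableEq n]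

-- Instance search for the operator norm on `Matrix (m ⊕ n) (m ⊕ n) 𝕂` exceeds the default
-- size bound.
set_option synthInstance.maxSize 256 in
theorem exp_fromBlocks_diagonal (A : Matrix m m 𝕂) (B : Matrix n n 𝕂) :
    exp (fromBlocks A 0 0 B) = fromBlocks (exp A) 0 0 (exp B) := by
  have hsum := ((exp_series_hasSum_exp' (𝕂 := 𝕂) A).prodMk
      (exp_series_hasSum_exp' (𝕂 := 𝕂) B)).map
    (AddMonoidHom.mk' (fun p : Matrix m m 𝕂 × Matrix n n 𝕂 => fromBlocks p.1 0 0 p.2)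
      fun p q => by simp [fromBlocks_add])
    (continuous_fst.matrix_fromBlocks continuous_const continuous_const continuous_snd)
  have hterm (k : ℕ) :
      fromBlocks ((k.factorial⁻¹ : 𝕂) • A ^ k) 0 0 ((k.factorial⁻¹ : 𝕂) • B ^ k) =
        (k.factorial⁻¹ : 𝕂) • fromBlocks A 0 0 B ^ k := by
    simp [fromBlocks_diagonal_pow, fromBlocks_smul]
  simp only [Function.comp_def, AddMonoidHom.mk'_apply, hterm] at hsum
  exact (exp_series_hasSum_exp' (𝕂 := 𝕂) (fromBlocks A 0 0 B)).unique hsum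

theorem exp_fromBlocks_mul_sub_mul (A : Matrix m m 𝕂) (B : Matrix n n 𝕂)
    (Z : Matrix m n 𝕂) :
    exp (fromBlocks A (Z * B - A * Z) 0 B) =
      fromBlocks (exp A) (Z * exp B - exp A * Z) 0 (exp B) := by
  let U : (Matrix (m ⊕ n) (m ⊕ n) 𝕂)ˣ :=
    { val := fromBlocks 1 Z 0 1
      inv := fromBlocks 1 (-Z) 0 1
      val_inv := by simp [fromBlocks_multiply]
      inv_val := by simp [fromBlocks_multiply] }
  have hconj (X : Matrix m m 𝕂) (Y : Matrix n n 𝕂) :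
      U * fromBlocks X 0 0 Y * (↑U⁻¹ : Matrix (m ⊕ n) (m ⊕ n) 𝕂) =
        fromBlocks X (Z * Y - X * Z) 0 Y := by
    simp [U, fromBlocks_multiply, sub_eq_neg_add]
  rw [← hconj, Matrix.exp_units_conj, exp_fromBlocks_diagonal, hconj]

theorem exp_fromBlocks_add_smul_of_ne_zero (M E : Matrix m m 𝕂) {t : 𝕂} (ht : t ≠ 0) :
    exp (fromBlocks (M + t • E) E 0 M) =
      fromBlocks (exp (M + t • E)) (t⁻¹ • (exp (M + t • E) - exp M)) 0 (exp M) := by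
  have hE : (-t⁻¹ • 1 : Matrix m m 𝕂) * M - (M + t • E) * (-t⁻¹ • 1) = E := by
    simp [smul_add, smul_smul, ht]
  have h := exp_fromBlocks_mul_sub_mul (M + t • E) M (-t⁻¹ • 1)
  rw [hE] at h
  rw [h, smul_sub]
  congr 1
  simp only [neg_smul, Matrix.neg_mul, Matrix.mul_neg, Matrix.smul_mul, Matrix.mul_smul,
    Matrix.one_mul, Matrix.mul_one]
  abel

theorem hasDerivAt_exp_add_smul (M E : Matrix m m 𝕂) :
    HasDerivAt (fun t : 𝕂 => exp (M + t • E)) (fderiv 𝕂 exp M E) 0 := by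
  have hexp : HasFDerivAt (exp : Matrix m m 𝕂 → Matrix m m 𝕂) (fderiv 𝕂 exp M)
      (M + (0 : 𝕂) • E) := by
    rw [zero_smul, add_zero]
    exact (exp_analytic (𝕂 := 𝕂) M).differentiableAt.hasFDerivAt
  have h := hexp.comp_hasDerivAt (0 : 𝕂) (((hasDerivAt_id (0 : 𝕂)).smul_const E).const_add M)
  simp only [id, one_smul] at h
  -- not `simpa`: `h` carries the norm topology, the goal `Matrix`'s own one, equal only up to
  -- unfolding the instances
  exact h

set_option synthInstance.maxSize 256 in
theorem exp_fromBlocks_eq_fromBlocks_fderiv (M E : Matrix m m 𝕂) :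
    exp (fromBlocks M E 0 M) = fromBlocks (exp M) (fderiv 𝕂 exp M E) 0 (exp M) := by
  have hderiv := hasDerivAt_exp_add_smul M E
  have hexp : Tendsto (fun t : 𝕂 => exp (M + t • E)) (𝓝[≠] 0) (𝓝 (exp M)) := by
    have h := hderiv.continuousAt.tendsto.mono_left (nhdsWithin_le_nhds (s := {0}ᶜ))
    simp only [zero_smul, add_zero] at h
    exact h
  have hslope : Tendsto (fun t : 𝕂 => t⁻¹ • (exp (M + t • E) - exp M)) (𝓝[≠] 0)
      (𝓝 (fderiv 𝕂 exp M E)) := by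
    have h := hderiv.tendsto_slope_zero
    simp only [zero_add, zero_smul, add_zero] at h
    exact h
  have hblocks :
      Continuous fun p : Matrix m m 𝕂 × Matrix m m 𝕂 => fromBlocks p.1 p.2 0 (exp M) :=
    continuous_fst.matrix_fromBlocks continuous_snd continuous_const continuous_const
  have hlim : Tendsto (fun t : 𝕂 => exp (fromBlocks (M + t • E) E 0 M)) (𝓝[≠] 0)
      (𝓝 (fromBlocks (exp M) (fderiv 𝕂 exp M E) 0 (exp M))) :=
    ((hblocks.tendsto _).comp (hexp.prodMk_nhds hslope)).congr' <|
      eventually_nhdsWithin_of_forall fun t ht => (exp_fromBlocks_add_smul_of_ne_zero M E ht).symm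
  have hcont : Continuous fun t : 𝕂 => exp (fromBlocks (M + t • E) E 0 M) := by fun_prop
  refine tendsto_nhds_unique ?_ hlim
  simpa using (hcont.tendsto 0).mono_left (nhdsWithin_le_nhds (s := {0}ᶜ))

/-- For `n × n` real matrices `M` and `E`, with `L_exp(M, E)` the Fréchet derivative of the
matrix exponential at `M` applied to `E`,
`exp [[M, E], [0, M]] = [[exp M, L_exp(M, E)], [0, exp M]]`. -/
theorem exp_fromBlocks_eq_fromBlocks_exp_frechet {n : ℕ} (M E : Matrix (Fin n) (Fin n) ℝ) :
    NormedSpace.exp (Matrix.fromBlocks M E 0 M) =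
      Matrix.fromBlocks (NormedSpace.exp M)
        (fderiv ℝ (NormedSpace.exp :
          Matrix (Fin n) (Fin n) ℝ → Matrix (Fin n) (Fin n) ℝ) M E)
        0 (NormedSpace.exp M) :=
  exp_fromBlocks_eq_fromBlocks_fderiv M E
end

section
/- Let A be an n×n real symmetric matrix and fix indices i, j. Let L_exp(A, ·) denote the Fréchet derivative of the matrix exponential at A. Then Tr(L_exp(A, 1_i 1_j^T)) = exp(A)_{ij}, i.e., the trace of the Fréchet derivative of exp at A in the rank-one direction 1_i 1_j^T equals the (i,j) entry of exp(A). -/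
attribute [local instance] Matrix.linftyOpNormedRing Matrix.linftyOpNormedAlgebra

open NormedSpace Nat

/-! For a tracial functional `τ`, cyclicity collapses the derivative of `y ↦ τ (y ^ (m + 1))`
in direction `e`, namely `∑ᵢ τ (y ^ (m - i) * e * y ^ i)`, to `(m + 1) • τ (y ^ m * e)`.
Differentiating the exponential series termwise therefore gives
`τ (L_exp(x, e)) = τ (exp x * e)`. For the matrix trace and `e = 1ᵢ1ⱼᵀ` this is `exp(A)ⱼᵢ`,
which is `exp(A)ᵢⱼ` because `exp A` is symmetric. -/

section Tracial

variable {𝕂 𝔸 F : Type*} [RCLike 𝕂] [NormedRing 𝔸] [NormedAlgebra 𝕂 𝔸]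
  [NormedAddCommGroup F] [NormedSpace 𝕂 F] {τ : 𝔸 →L[𝕂] F}

theorem hasFDerivAt_tracial_comp_pow_succ (hτ : ∀ a b, τ (a * b) = τ (b * a)) (m : ℕ) (x : 𝔸) :
    HasFDerivAt (fun y => τ (y ^ (m + 1))) ((m + 1) • τ.comp (.mul 𝕂 𝔸 (x ^ m))) x := by
  refine (τ.hasFDerivAt.comp x (hasFDerivAt_pow' (m + 1))).congr_fderiv ?_
  ext e
  have hcyclic : ∀ i ∈ Finset.range (m + 1), τ (x ^ (m - i) * e * x ^ i) = τ (x ^ m * e) := by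
    intro i hi
    rw [hτ, ← mul_assoc, ← pow_add, Nat.add_sub_cancel' (Finset.mem_range_succ_iff.mp hi)]
  simp [Finset.sum_congr rfl hcyclic]

variable [CompleteSpace 𝔸]

theorem summable_apply_expSeries_succ (τ : 𝔸 →L[𝕂] F) (y : 𝔸) :
    Summable fun m : ℕ => ((m + 1)! : 𝕂)⁻¹ • τ (y ^ (m + 1)) := by
  simpa using ((summable_nat_add_iff 1).mpr (expSeries_summable' (𝕂 := 𝕂) y)).mapL τ

theorem apply_exp_eq_add_tsum (τ : 𝔸 →L[𝕂] F) (y : 𝔸) :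
    τ (exp y) = τ 1 + ∑' m : ℕ, ((m + 1)! : 𝕂)⁻¹ • τ (y ^ (m + 1)) := by
  rw [congrFun (exp_eq_tsum 𝕂) y, (expSeries_summable' y).tsum_eq_zero_add, map_add,
    τ.map_tsum ((summable_nat_add_iff 1).mpr (expSeries_summable' y))]
  simp

variable [NormOneClass 𝔸] [CompleteSpace F]

theorem hasFDerivAt_tracial_comp_exp (hτ : ∀ a b, τ (a * b) = τ (b * a)) (x : 𝔸) :
    HasFDerivAt (fun y => τ (exp y)) (τ.comp (.mul 𝕂 𝔸 (exp x))) x := by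
  set Φ : 𝔸 →L[𝕂] 𝔸 →L[𝕂] F := (ContinuousLinearMap.compL 𝕂 𝔸 𝔸 F τ).comp (.mul 𝕂 𝔸)
  set R := ‖x‖ + 1
  have hterm (m : ℕ) (y : 𝔸) : HasFDerivAt (fun z => ((m + 1)! : 𝕂)⁻¹ • τ (z ^ (m + 1)))
      (Φ ((m ! : 𝕂)⁻¹ • y ^ m)) y := by
    refine ((hasFDerivAt_tracial_comp_pow_succ hτ m y).const_smul _).congr_fderiv ?_
    rw [map_smul, ← Nat.cast_smul_eq_nsmul 𝕂, smul_smul]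
    congr 1
    push_cast [Nat.factorial_succ]
    field_simp
  have hbound (m : ℕ) (y : 𝔸) (hy : y ∈ Metric.ball 0 R) :
      ‖Φ ((m ! : 𝕂)⁻¹ • y ^ m)‖ ≤ ‖Φ‖ * (R ^ m / m !) := by
    refine Φ.le_opNorm_of_le ?_
    rw [norm_smul, norm_inv, RCLike.norm_natCast, inv_mul_eq_div]
    gcongr
    exact (norm_pow_le y m).trans (pow_le_pow_left₀ (norm_nonneg y) (mem_ball_zero_iff.mp hy).le m)
  have hx : x ∈ Metric.ball (0 : 𝔸) R := by simp [R]
  -- `Metric.isPreconnected_ball` needs a real normed space structure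
  let : NormedSpace ℝ 𝔸 := .restrictScalars ℝ 𝕂 𝔸
  have hseries := (hasFDerivAt_tsum_of_isPreconnected
    ((Real.summable_pow_div_factorial R).mul_left ‖Φ‖) Metric.isOpen_ball
    Metric.isPreconnected_ball (fun m y _ => hterm m y) hbound hx
    (summable_apply_expSeries_succ τ x) hx).const_add (τ 1)
  rw [← Φ.map_tsum (expSeries_summable' x), ← congrFun (exp_eq_tsum 𝕂) x] at hseries
  exact hseries.congr_of_eventuallyEq (.of_forall (apply_exp_eq_add_tsum τ))

theorem tracial_fderiv_exp_apply (hτ : ∀ a b, τ (a * b) = τ (b * a)) (x e : 𝔸) :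
    τ (fderiv 𝕂 exp x e) = τ (exp x * e) := by
  have hchain := τ.hasFDerivAt.comp x (exp_analytic x).differentiableAt.hasFDerivAt
  exact congrArg (· e) (hchain.unique (hasFDerivAt_tracial_comp_exp hτ x))

end Tracial

/-- For a real symmetric matrix `A` and indices `i, j`, the trace of the Fréchet
derivative of the matrix exponential at `A` in the rank-one direction `1ᵢ1ⱼᵀ` equals
the `(i,j)` entry of `exp A`. -/
theorem trace_frechet_exp_stdBasisMatrix {n : ℕ} (A : Matrix (Fin n) (Fin n) ℝ)
    (hA : A.IsSymm) (i j : Fin n) :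
    (fderiv ℝ (NormedSpace.exp :
        Matrix (Fin n) (Fin n) ℝ → Matrix (Fin n) (Fin n) ℝ) A
      (Matrix.single i j (1 : ℝ))).trace = NormedSpace.exp A i j := by
  -- makes the operator norm a `NormOneClass`
  have : Nonempty (Fin n) := ⟨i⟩
  let trace : Matrix (Fin n) (Fin n) ℝ →L[ℝ] ℝ :=
    LinearMap.toContinuousLinearMap (Matrix.traceLinearMap (Fin n) ℝ ℝ)
  calc _ = (exp A * Matrix.single i j 1).trace :=
        tracial_fderiv_exp_apply (τ := trace) Matrix.trace_mul_comm A _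
    _ = exp A j i := by simp [Matrix.trace_mul_single]
    _ = exp A i j := hA.exp.apply i j
end
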